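/- arXiv:2401.12463 — 6 statements merged into one kernel-verified Lean document; each statement's English description precedes it below -/
import Mathlib

section
/- Let A ∈ ℤ^{m×n}, b ∈ ℤ^m, Q_I = AᵀA, L ∈ ℤⁿ a lower-bound vector, and E ∈ ℤ^{n×p} an encoding matrix. Define Q_B = EᵀQ_I E + 2·diag((LᵀQ_I − bᵀA)E), where diag(v) is the diagonal matrix with diagonal v. Then for every binary vector X ∈ {0,1}^p, writing x = L + EX, one has XᵀQ_B X = xᵀQ_I x − 2bᵀAx − (LᵀQ_I L − 2bᵀAL). In particular, minimizing XᵀQ_B X over X ∈ {0,1}^p is equivalent (up to the additive constant LᵀQ_I L − 2bᵀAL) to minimizing the QUIO objective xᵀQ_I x − 2bᵀAx over x ∈ L + E·{0,1}^p. -/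
open Matrix

section QuboEncoding

variable {R ι κ μ : Type*} [CommRing R] [Fintype ι] [Fintype κ] [DecidableEq κ] [Fintype μ]

def quioObjective (Q : Matrix ι ι R) (A : Matrix μ ι R) (b : μ → R) (x : ι → R) : R :=
  x ⬝ᵥ Q *ᵥ x - 2 * b ⬝ᵥ A *ᵥ x

def quboMatrix (Q : Matrix ι ι R) (A : Matrix μ ι R) (b : μ → R) (L : ι → R)
    (E : Matrix ι κ R) : Matrix κ κ R :=
  Eᵀ * Q * E + (2 : R) • diagonal ((L ᵥ* Q - b ᵥ* A) ᵥ* E)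

theorem dotProduct_diagonal_mulVec_of_mul_self {X : κ → R} (hX : ∀ i, X i * X i = X i)
    (v : κ → R) : X ⬝ᵥ diagonal v *ᵥ X = v ⬝ᵥ X := by
  simp only [dotProduct, mulVec_diagonal]
  exact Finset.sum_congr rfl fun i _ => by rw [mul_left_comm, hX]

theorem add_dotProduct_mulVec_add_of_isSymm {Q : Matrix ι ι R} (hQ : Q.IsSymm) (x y : ι → R) :
    (x + y) ⬝ᵥ Q *ᵥ (x + y) = x ⬝ᵥ Q *ᵥ x + 2 * (x ⬝ᵥ Q *ᵥ y) + y ⬝ᵥ Q *ᵥ y := by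
  have hyx : y ⬝ᵥ Q *ᵥ x = x ⬝ᵥ Q *ᵥ y := by
    rw [dotProduct_comm, ← vecMul_transpose, hQ.eq, dotProduct_mulVec]
  simp only [mulVec_add, dotProduct_add, add_dotProduct, hyx]
  ring

/-- On binary vectors the diagonal term of the QUBO matrix absorbs the linear part of the
objective, because `Xᵢ² = Xᵢ`. -/
theorem dotProduct_quboMatrix_mulVec {Q : Matrix ι ι R} (hQ : Q.IsSymm) (A : Matrix μ ι R)
    (b : μ → R) (L : ι → R) (E : Matrix ι κ R) {X : κ → R} (hX : ∀ i, X i * X i = X i) :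
    X ⬝ᵥ quboMatrix Q A b L E *ᵥ X =
      quioObjective Q A b (L + E *ᵥ X) - quioObjective Q A b L := by
  rw [quboMatrix, add_mulVec, dotProduct_add, smul_mulVec, dotProduct_smul, smul_eq_mul,
    dotProduct_diagonal_mulVec_of_mul_self hX, quioObjective, quioObjective,
    add_dotProduct_mulVec_add_of_isSymm hQ, ← mulVec_mulVec, ← mulVec_mulVec, mulVec_transpose,
    dotProduct_comm X, ← dotProduct_mulVec, ← dotProduct_mulVec, sub_dotProduct,
    ← dotProduct_mulVec, ← dotProduct_mulVec, mulVec_add, dotProduct_add,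
    dotProduct_comm (Q *ᵥ E *ᵥ X)]
  ring

end QuboEncoding

/-- **Binary encoding of the QUIO as a QUBO.**
With `Q_I = AᵀA`, `x = L + EX` and
`Q_B = EᵀQ_I E + 2·diag((LᵀQ_I − bᵀA)E)`, for every binary `X ∈ {0,1}^p` one has
`XᵀQ_B X = xᵀQ_I x − 2bᵀAx − (LᵀQ_I L − 2bᵀAL)`; in particular minimizing the QUBO
over binary vectors is equivalent, up to this additive constant, to minimizing the
QUIO objective over `x ∈ L + E·{0,1}^p`. -/
theorem stmt_1 (m n p : ℕ) (A : Matrix (Fin m) (Fin n) ℤ) (b : Fin m → ℤ)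
    (L : Fin n → ℤ) (E : Matrix (Fin n) (Fin p) ℤ)
    (QI : Matrix (Fin n) (Fin n) ℤ) (hQI : QI = Aᵀ * A)
    (QB : Matrix (Fin p) (Fin p) ℤ)
    (hQB : QB = Eᵀ * QI * E +
      (2 : ℤ) • Matrix.diagonal (Matrix.vecMul (Matrix.vecMul L QI - Matrix.vecMul b A) E)) :
    (∀ X : Fin p → ℤ, (∀ i, X i = 0 ∨ X i = 1) →
      dotProduct X (QB.mulVec X) =
        dotProduct (L + E.mulVec X) (QI.mulVec (L + E.mulVec X))
          - 2 * dotProduct b (A.mulVec (L + E.mulVec X))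
          - (dotProduct L (QI.mulVec L) - 2 * dotProduct b (A.mulVec L))) ∧
    (∀ X Y : Fin p → ℤ, (∀ i, X i = 0 ∨ X i = 1) → (∀ i, Y i = 0 ∨ Y i = 1) →
      (dotProduct X (QB.mulVec X) ≤ dotProduct Y (QB.mulVec Y) ↔
        dotProduct (L + E.mulVec X) (QI.mulVec (L + E.mulVec X))
          - 2 * dotProduct b (A.mulVec (L + E.mulVec X)) ≤
        dotProduct (L + E.mulVec Y) (QI.mulVec (L + E.mulVec Y))
          - 2 * dotProduct b (A.mulVec (L + E.mulVec Y)))) := by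
  have hsymm : QI.IsSymm := by rw [hQI, IsSymm, transpose_mul, transpose_transpose]
  have encode : ∀ X : Fin p → ℤ, (∀ i, X i = 0 ∨ X i = 1) →
      X ⬝ᵥ QB *ᵥ X = quioObjective QI A b (L + E *ᵥ X) - quioObjective QI A b L := by
    intro X hX
    have hidem : ∀ i, X i * X i = X i := fun i => by rcases hX i with h | h <;> simp [h]
    rw [hQB]
    exact dotProduct_quboMatrix_mulVec hsymm A b L E hidem
  refine ⟨encode, fun X Y hX hY => ?_⟩
  rw [encode X hX, encode Y hY, sub_le_sub_iff_right]
  rfl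
end

section
/- For every integer matrix A ∈ ℤ^{m×n}, the Graver basis G(A), i.e., the set of ⊑-minimal elements of L*(A), is a finite set. -/
/-- `x` is conformal to `y` (written `x ⊑ y`): componentwise, `x i * y i ≥ 0`
(same orthant) and `|x i| ≤ |y i|`. -/
def ConformalTo {n : ℕ} (x y : Fin n → ℤ) : Prop :=
  ∀ i, 0 ≤ x i * y i ∧ |x i| ≤ |y i|

/-- `L*(A) = {x ∈ ℤⁿ : Ax = 0, x ≠ 0}`. -/
def kernelLattice {m n : ℕ} (A : Matrix (Fin m) (Fin n) ℤ) : Set (Fin n → ℤ) :=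
  {x | A.mulVec x = 0 ∧ x ≠ 0}

/-- The Graver basis `G(A)`: the set of `⊑`-minimal elements of `L*(A)`. -/
def graverBasis {m n : ℕ} (A : Matrix (Fin m) (Fin n) ℤ) : Set (Fin n → ℤ) :=
  {g | g ∈ kernelLattice A ∧ ∀ h ∈ kernelLattice A, h ≠ g → ¬ ConformalTo h g}

/-!
Splitting each coordinate of `x ∈ ℤⁿ` into its positive and negative part embeds `ℤⁿ`
into `ℕ^{2n}` so that the componentwise order on `ℕ^{2n}` implies `⊑`. Distinct
`⊑`-minimal elements of a set therefore map to an antichain of `ℕ^{2n}`, which is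
finite by Dickson's lemma.
-/

lemma Int.conformal_of_toNat_le {a b : ℤ} (hpos : a.toNat ≤ b.toNat)
    (hneg : (-a).toNat ≤ (-b).toNat) : 0 ≤ a * b ∧ |a| ≤ |b| := by
  rcases le_total 0 a with ha | ha <;> rcases le_total 0 b with hb | hb
  · exact ⟨mul_nonneg ha hb, by rw [abs_of_nonneg ha, abs_of_nonneg hb]; omega⟩
  · obtain rfl : a = 0 := by omega
    simp
  · obtain rfl : a = 0 := by omega
    simp
  · exact ⟨mul_nonneg_of_nonpos_of_nonpos ha hb,
      by rw [abs_of_nonpos ha, abs_of_nonpos hb]; omega⟩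

def signParts {ι : Type*} (x : ι → ℤ) : ι → ℕ × ℕ :=
  fun i => ((x i).toNat, (-x i).toNat)

lemma signParts_injective {ι : Type*} : Function.Injective (signParts (ι := ι)) := by
  intro x y hxy
  funext i
  have hi := congrFun hxy i
  simp only [signParts, Prod.mk.injEq] at hi
  omega

lemma conformalTo_of_signParts_le {n : ℕ} {x y : Fin n → ℤ}
    (h : signParts x ≤ signParts y) : ConformalTo x y :=
  fun i => Int.conformal_of_toNat_le (h i).1 (h i).2

theorem finite_setOf_conformalTo_minimal {n : ℕ} (S : Set (Fin n → ℤ)) :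
    {g | g ∈ S ∧ ∀ h ∈ S, h ≠ g → ¬ ConformalTo h g}.Finite := by
  set M := {g | g ∈ S ∧ ∀ h ∈ S, h ≠ g → ¬ ConformalTo h g}
  have hanti : IsAntichain (· ≤ ·) (signParts '' M) := by
    rintro _ ⟨g, hg, rfl⟩ _ ⟨h, hh, rfl⟩ hne hle
    exact hh.2 g hg.1 (ne_of_apply_ne _ hne) (conformalTo_of_signParts_le hle)
  have hfin : (signParts '' M).Finite :=
    hanti.finite_of_partiallyWellOrderedOn (Set.isPWO_of_wellQuasiOrderedLE _)
  exact hfin.of_finite_image signParts_injective.injOn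

/-- **Finiteness of the Graver basis.** For every integer matrix `A ∈ ℤ^{m×n}`,
the Graver basis `G(A)` is a finite set. -/
theorem stmt_2 (m n : ℕ) (A : Matrix (Fin m) (Fin n) ℤ) :
    (graverBasis A).Finite :=
  finite_setOf_conformalTo_minimal (kernelLattice A)
end

section
/- Every infinite subset S of ℤⁿ contains two distinct elements x and y with x ⊑ y; equivalently, the conformal order ⊑ admits no infinite antichain in ℤⁿ. -/
/-!
Record each `x ∈ ℤⁿ` by its sign pattern `i ↦ (0 ≤ x i)` and its vector of absolute values in `ℕⁿ`.
Comparing sign patterns by equality and absolute values componentwise is a well quasi-order: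
there are finitely many sign patterns, and `ℕⁿ` is well quasi-ordered by Dickson's lemma.
It refines `⊑`, so `⊑` is a well quasi-order as well and has no infinite antichain.
-/

theorem WellQuasiOrdered.of_map {α β : Type*} {r : α → α → Prop} {s : β → β → Prop}
    (hs : WellQuasiOrdered s) (f : α → β) (hf : ∀ a b, s (f a) (f b) → r a b) :
    WellQuasiOrdered r := fun g ↦
  let ⟨m, k, hmk, h⟩ := hs (f ∘ g)
  ⟨m, k, hmk, hf _ _ h⟩

theorem Int.mul_nonneg_of_nonneg_iff {a b : ℤ} (h : 0 ≤ a ↔ 0 ≤ b) : 0 ≤ a * b := by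
  by_cases ha : 0 ≤ a
  · exact mul_nonneg ha (h.mp ha)
  · exact mul_nonneg_of_nonpos_of_nonpos (by omega) (by omega)

theorem conformalTo_of_natAbs_le {n : ℕ} {x y : Fin n → ℤ}
    (habs : ∀ i, (x i).natAbs ≤ (y i).natAbs)
    (hsign : (fun i ↦ decide (0 ≤ x i)) = fun i ↦ decide (0 ≤ y i)) :
    ConformalTo x y := fun i ↦
  ⟨Int.mul_nonneg_of_nonneg_iff (decide_eq_decide.mp (congrFun hsign i)),
    by simpa only [Int.abs_eq_natAbs, Nat.cast_le] using habs i⟩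

theorem wellQuasiOrdered_conformalTo (n : ℕ) :
    WellQuasiOrdered (ConformalTo (n := n)) :=
  (wellQuasiOrdered_le.prod (Finite.wellQuasiOrdered (· = ·))).of_map
    (fun x : Fin n → ℤ ↦ ((fun i ↦ (x i).natAbs), fun i ↦ decide (0 ≤ x i)))
    fun _ _ h ↦ conformalTo_of_natAbs_le h.1 h.2

/-- **No infinite antichains for the conformal order.** Every infinite subset `S`
of `ℤⁿ` contains two distinct elements `x`, `y` with `x ⊑ y`. -/
theorem stmt_3 (n : ℕ) (S : Set (Fin n → ℤ)) (hS : S.Infinite) :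
    ∃ x ∈ S, ∃ y ∈ S, x ≠ y ∧ ConformalTo x y := by
  by_contra! hanti
  exact hS (IsAntichain.finite_of_wellQuasiOrdered hanti (wellQuasiOrdered_conformalTo n))
end

section
/- Let A ∈ ℤ^{m×n}, b ∈ ℤ^m, l, u ∈ ℤⁿ, and w ∈ ℝⁿ. The Graver basis G(A) is a test set (optimality certificate) for the integer linear program min{wᵀx : Ax = b, l ≤ x ≤ u, x ∈ ℤⁿ}: if x₀ is feasible (Ax₀ = b and l ≤ x₀ ≤ u) and there exists a feasible x with wᵀx < wᵀx₀, then there exist g ∈ G(A) and a positive integer λ such that x₀ + λg is feasible and wᵀ(x₀ + λg) < wᵀx₀. -/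
lemma conformalTo_iff {n : ℕ} {x y : Fin n → ℤ} :
    ConformalTo x y ↔ ∀ i, (0 ≤ x i ∧ x i ≤ y i) ∨ (y i ≤ x i ∧ x i ≤ 0) := by
  refine forall_congr' fun i => ?_
  rw [mul_nonneg_iff, abs_eq_max_neg, abs_eq_max_neg]
  omega

namespace ConformalTo

variable {n : ℕ} {x y z : Fin n → ℤ}

lemma refl (x : Fin n → ℤ) : ConformalTo x x :=
  conformalTo_iff.2 fun i => by omega

lemma trans (hxy : ConformalTo x y) (hyz : ConformalTo y z) : ConformalTo x z :=
  conformalTo_iff.2 fun i => by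
    have := conformalTo_iff.1 hxy i
    have := conformalTo_iff.1 hyz i
    omega

lemma sub_left (h : ConformalTo x y) : ConformalTo (y - x) y :=
  conformalTo_iff.2 fun i => by
    have := conformalTo_iff.1 h i
    simp only [Pi.sub_apply]
    omega

lemma sum_natAbs_lt (h : ConformalTo x y) (hne : x ≠ y) :
    ∑ i, (x i).natAbs < ∑ i, (y i).natAbs := by
  obtain ⟨j, hj⟩ := Function.ne_iff.1 hne
  have h := conformalTo_iff.1 h
  exact Finset.sum_lt_sum (fun i _ => by have := h i; omega)
    ⟨j, Finset.mem_univ j, by have := h j; omega⟩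

end ConformalTo

section GraverBasis

variable {m n : ℕ} {A : Matrix (Fin m) (Fin n) ℤ} {z : Fin n → ℤ}

lemma exists_mem_graverBasis_conformalTo (hz : z ∈ kernelLattice A) :
    ∃ g ∈ graverBasis A, ConformalTo g z := by
  obtain ⟨g, ⟨hgA, hgz⟩, hmin⟩ :=
    (measure fun x : Fin n → ℤ => ∑ i, (x i).natAbs).wf.has_min
      {x | x ∈ kernelLattice A ∧ ConformalTo x z} ⟨z, hz, .refl z⟩
  refine ⟨g, ⟨hgA, fun h hhA hne hhg => hmin h ⟨hhA, hhg.trans hgz⟩ ?_⟩, hgz⟩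
  exact hhg.sum_natAbs_lt hne

lemma exists_mem_graverBasis_conformalTo_neg {M : Type*} [AddCommGroup M] [LinearOrder M]
    [IsOrderedAddMonoid M] (f : (Fin n → ℤ) →+ M) (hz : z ∈ kernelLattice A) (hfz : f z < 0) :
    ∃ g ∈ graverBasis A, ConformalTo g z ∧ f g < 0 := by
  induction z using (measure fun x : Fin n → ℤ => ∑ i, (x i).natAbs).wf.induction with
  | _ z ih =>
    obtain ⟨g, hg, hgz⟩ := exists_mem_graverBasis_conformalTo hz
    by_cases hfg : f g < 0
    · exact ⟨g, hg, hgz, hfg⟩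
    have hrest : f (z - g) < 0 := by
      rw [map_sub]
      exact sub_neg_of_lt (hfz.trans_le (not_lt.1 hfg))
    have hrestA : z - g ∈ kernelLattice A :=
      ⟨by rw [Matrix.mulVec_sub, hz.1, hg.1.1, sub_zero],
        fun h => hrest.ne (by rw [h, map_zero])⟩
    have hrestz := hgz.sub_left
    obtain ⟨g', hg', hg'z, hfg'⟩ := ih (z - g)
      (hrestz.sum_natAbs_lt (sub_eq_self.not.2 hg.1.2)) hrestA hrest
    exact ⟨g', hg', hg'z.trans hrestz, hfg'⟩

end GraverBasis

lemma add_mem_box_of_conformalTo_sub {n : ℕ} {l u x₀ x g : Fin n → ℤ}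
    (hx₀ : ∀ i, l i ≤ x₀ i ∧ x₀ i ≤ u i) (hx : ∀ i, l i ≤ x i ∧ x i ≤ u i)
    (hg : ConformalTo g (x - x₀)) (i : Fin n) : l i ≤ (x₀ + g) i ∧ (x₀ + g) i ≤ u i := by
  have := conformalTo_iff.1 hg i
  have := hx₀ i
  have := hx i
  simp only [Pi.add_apply, Pi.sub_apply] at *
  omega

def linearObjective {n : ℕ} (w : Fin n → ℝ) : (Fin n → ℤ) →+ ℝ where
  toFun x := ∑ i, w i * (x i : ℝ)
  map_zero' := by simp
  map_add' x y := by simp [mul_add, Finset.sum_add_distrib]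

/-- **The Graver basis is a test set for integer linear programs.**
If `x₀` is feasible for `min {wᵀx : Ax = b, l ≤ x ≤ u, x ∈ ℤⁿ}` and some feasible `x`
has strictly smaller objective, then some `g ∈ G(A)` and positive integer `λ` give a
feasible improving step `x₀ + λg`. -/
theorem stmt_4 (m n : ℕ) (A : Matrix (Fin m) (Fin n) ℤ) (b : Fin m → ℤ)
    (l u : Fin n → ℤ) (w : Fin n → ℝ) (x₀ : Fin n → ℤ)
    (hx₀ : A.mulVec x₀ = b ∧ ∀ i, l i ≤ x₀ i ∧ x₀ i ≤ u i)
    (x : Fin n → ℤ)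
    (hx : A.mulVec x = b ∧ ∀ i, l i ≤ x i ∧ x i ≤ u i)
    (himp : ∑ i, w i * (x i : ℝ) < ∑ i, w i * (x₀ i : ℝ)) :
    ∃ g ∈ graverBasis A, ∃ lam : ℕ, 0 < lam ∧
      A.mulVec (x₀ + (lam : ℤ) • g) = b ∧
      (∀ i, l i ≤ (x₀ + (lam : ℤ) • g) i ∧ (x₀ + (lam : ℤ) • g) i ≤ u i) ∧
      ∑ i, w i * (((x₀ + (lam : ℤ) • g) i : ℤ) : ℝ) < ∑ i, w i * (x₀ i : ℝ) := by
  set f := linearObjective w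
  have hfz : f (x - x₀) < 0 := by
    rw [map_sub, sub_neg]
    exact himp
  have hz : x - x₀ ∈ kernelLattice A :=
    ⟨by rw [Matrix.mulVec_sub, hx.1, hx₀.1, sub_self],
      fun h => hfz.ne (by rw [h, map_zero])⟩
  obtain ⟨g, hg, hgz, hfg⟩ := exists_mem_graverBasis_conformalTo_neg f hz hfz
  refine ⟨g, hg, 1, one_pos, ?_, ?_, ?_⟩ <;> rw [Nat.cast_one, one_smul]
  · rw [Matrix.mulVec_add, hx₀.1, hg.1.1, add_zero]
  · exact add_mem_box_of_conformalTo_sub hx₀.2 hx.2 hgz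
  · change f (x₀ + g) < f x₀
    rw [map_add]
    exact add_lt_of_neg_right _ hfg
end

section
/- Every nonzero element z of L*(A) can be written as a finite nonnegative-integer combination z = Σᵢ λᵢ gᵢ of Graver basis elements gᵢ ∈ G(A) with each λᵢ a positive integer and each gᵢ ⊑ z (a conformal sum). -/
lemma Int.conformal_iff {a b : ℤ} :
    (0 ≤ a * b ∧ |a| ≤ |b|) ↔ (0 ≤ a ∧ a ≤ b) ∨ (b ≤ a ∧ a ≤ 0) := by
  rw [mul_nonneg_iff]
  rcases abs_cases a with ⟨ha, _⟩ | ⟨ha, _⟩ <;> rcases abs_cases b with ⟨hb, _⟩ | ⟨hb, _⟩ <;>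
    rw [ha, hb] <;> omega

namespace ConformalTo

variable {n : ℕ} {x y z : Fin n → ℤ}

lemma iff_between : ConformalTo x y ↔ ∀ i, (0 ≤ x i ∧ x i ≤ y i) ∨ (y i ≤ x i ∧ x i ≤ 0) :=
  forall_congr' fun _ => Int.conformal_iff

end ConformalTo

def l1Norm {n : ℕ} (x : Fin n → ℤ) : ℕ :=
  ∑ i, (x i).natAbs

lemma l1Norm_pos {n : ℕ} {x : Fin n → ℤ} (hx : x ≠ 0) : 0 < l1Norm x := by
  obtain ⟨i, hi⟩ := Function.ne_iff.1 hx
  exact Finset.sum_pos' (fun _ _ => Nat.zero_le _) ⟨i, Finset.mem_univ i, Int.natAbs_pos.2 hi⟩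

lemma ConformalTo.l1Norm_add_l1Norm_sub {n : ℕ} {x y : Fin n → ℤ} (h : ConformalTo x y) :
    l1Norm x + l1Norm (y - x) = l1Norm y := by
  rw [l1Norm, l1Norm, l1Norm, ← Finset.sum_add_distrib]
  refine Finset.sum_congr rfl fun i _ => ?_
  have := ConformalTo.iff_between.1 h i
  simp only [Pi.sub_apply]
  omega

section Graver

variable {m n : ℕ} (A : Matrix (Fin m) (Fin n) ℤ)

lemma sub_mem_kernelLattice {x y : Fin n → ℤ} (hx : x ∈ kernelLattice A)
    (hy : y ∈ kernelLattice A) (hxy : x ≠ y) : y - x ∈ kernelLattice A :=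
  ⟨by rw [Matrix.mulVec_sub, hx.1, hy.1, sub_zero], sub_ne_zero.2 hxy.symm⟩

lemma exists_conformalTo_of_not_mem_graverBasis {z : Fin n → ℤ} (hz : z ∈ kernelLattice A)
    (hzG : z ∉ graverBasis A) : ∃ h ∈ kernelLattice A, h ≠ z ∧ ConformalTo h z := by
  simpa [graverBasis, hz] using hzG

def IsConformalGraverSum (z : Fin n → ℤ) : Prop :=
  ∃ (k : ℕ) (g : Fin k → (Fin n → ℤ)) (lam : Fin k → ℕ),
    (∀ i, g i ∈ graverBasis A ∧ 0 < lam i ∧ ConformalTo (g i) z) ∧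
    z = ∑ i, (lam i : ℤ) • g i

variable {A}

lemma isConformalGraverSum_of_mem_graverBasis {g : Fin n → ℤ} (hg : g ∈ graverBasis A) :
    IsConformalGraverSum A g :=
  ⟨1, fun _ => g, fun _ => 1, fun _ => ⟨hg, one_pos, ConformalTo.refl g⟩, by simp⟩

lemma IsConformalGraverSum.add {x y : Fin n → ℤ} (hx : IsConformalGraverSum A x)
    (hy : IsConformalGraverSum A y) (hxz : ConformalTo x (x + y))
    (hyz : ConformalTo y (x + y)) : IsConformalGraverSum A (x + y) := by
  obtain ⟨k, g, lam, hg, rfl⟩ := hx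
  obtain ⟨k', g', lam', hg', rfl⟩ := hy
  refine ⟨k + k', Fin.append g g', Fin.append lam lam', fun i => ?_, ?_⟩
  · refine Fin.addCases (fun j => ?_) (fun j => ?_) i
    · simpa only [Fin.append_left] using ⟨(hg j).1, (hg j).2.1, (hg j).2.2.trans hxz⟩
    · simpa only [Fin.append_right] using ⟨(hg' j).1, (hg' j).2.1, (hg' j).2.2.trans hyz⟩
  · simp only [Fin.sum_univ_add, Fin.append_left, Fin.append_right]

theorem isConformalGraverSum_of_mem_kernelLattice {z : Fin n → ℤ}
    (hz : z ∈ kernelLattice A) : IsConformalGraverSum A z := by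
  induction hN : l1Norm z using Nat.strong_induction_on generalizing z with
  | _ N ih =>
    by_cases hzG : z ∈ graverBasis A
    · exact isConformalGraverSum_of_mem_graverBasis hzG
    obtain ⟨h, hK, hne, hconf⟩ := exists_conformalTo_of_not_mem_graverBasis A hz hzG
    have hK' := sub_mem_kernelLattice A hK hz hne
    have hsplit := hconf.l1Norm_add_l1Norm_sub
    have hpos := l1Norm_pos hK.2
    have hpos' := l1Norm_pos hK'.2
    have hdecomp := (ih _ (by omega) hK rfl).add (ih _ (by omega) hK' rfl)
    rw [add_sub_cancel] at hdecomp
    exact hdecomp hconf hconf.sub_left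

end Graver

/-- **Conformal decomposition into Graver elements.** Every `z ∈ L*(A)` is a finite
positive-integer combination `z = Σᵢ λᵢ gᵢ` of Graver basis elements `gᵢ ∈ G(A)` with
each `gᵢ ⊑ z`. -/
theorem stmt_5 (m n : ℕ) (A : Matrix (Fin m) (Fin n) ℤ)
    (z : Fin n → ℤ) (hz : z ∈ kernelLattice A) :
    ∃ (k : ℕ) (g : Fin k → (Fin n → ℤ)) (lam : Fin k → ℕ),
      (∀ i, g i ∈ graverBasis A ∧ 0 < lam i ∧ ConformalTo (g i) z) ∧
      z = ∑ i, (lam i : ℤ) • g i :=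
  isConformalGraverSum_of_mem_kernelLattice hz
end

section
/- Let G = (N, A) be a finite directed graph, E ⊆ N a set of exit nodes, and k ∈ N \ E. Suppose y : A → {0,1} satisfies: (i) for every node i ∈ N \ E, Σ_{j : (i,j) ∈ A} y(i,j) − Σ_{j : (j,i) ∈ A} y(j,i) = 1 if i = k and 0 otherwise; and (ii) every node i ∈ N \ E has at most one outgoing arc with y(i,j) = 1 (i.e., Σ_{j : (i,j) ∈ A} y(i,j) ≤ 1). Then there exists a directed path from k to some node of E using only arcs with y = 1 that visits no node more than once (a simple path); in particular, the added one-outgoing-edge constraint eliminates cyclic paths along the route from k to the exit. -/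
/-!
Let `R` be the relation "`(a, b)` is an arc carrying `y = 1`". Flow conservation together with the
out-degree bound forces in-degree `0` and out-degree `1` at `k`, and equal in- and out-degree at
most `1` at every other non-exit node. Hence following the unique `R`-successor from `k` never
gets stuck before an exit, never returns to `k`, and can never close a cycle elsewhere, since the
first repeated node would have two distinct `R`-predecessors. By finiteness the walk reaches `E`,
and its prefix up to the first exit is a simple path.
-/

open Finset

theorem Finset.sum_eq_card_filter_eq_one {ι : Type*} (s : Finset ι) {f : ι → ℕ}
    (hf : ∀ a, f a = 0 ∨ f a = 1) : ∑ a ∈ s, f a = #{a ∈ s | f a = 1} := by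
  rw [card_filter]
  refine sum_congr rfl fun a _ => ?_
  rcases hf a with h | h <;> simp [h]

section WalkToExit

variable {V : Type*} {R : V → V → Prop} {E : Set V} {k : V} {f : V → V}

theorem rel_iterate_succ (hf : ∀ i ∉ E, (i = k ∨ ∃ h, R h i) → R i (f i)) (n : ℕ)
    (hE : ∀ m ≤ n, f^[m] k ∉ E) : R (f^[n] k) (f^[n + 1] k) := by
  induction n with
  | zero => exact hf k (hE 0 le_rfl) (Or.inl rfl)
  | succ n ih =>
    rw [Function.iterate_succ_apply' f (n + 1)]
    exact hf _ (hE _ le_rfl) (Or.inr ⟨_, ih fun m hm => hE m (by omega)⟩)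

theorem iterate_ne_iterate_of_lt (hf : ∀ i ∉ E, (i = k ∨ ∃ h, R h i) → R i (f i))
    (hk : ∀ h, ¬ R h k) (hpred : ∀ i ∉ E, ∀ a b, R a i → R b i → a = b) {m n : ℕ}
    (hmn : m < n) (hE : ∀ l < n, f^[l] k ∉ E) : f^[m] k ≠ f^[n] k := by
  induction n generalizing m with
  | zero => omega
  | succ n ih =>
    intro heq
    have hR := rel_iterate_succ hf n fun l hl => hE l (by omega)
    rw [← heq] at hR
    rcases m with _ | m
    · exact hk _ hR
    · have hRm := rel_iterate_succ hf m fun l hl => hE l (by omega)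
      exact ih (by omega) (fun l hl => hE l (by omega))
        (hpred _ (hE _ hmn) _ _ hRm hR)

theorem iterate_injOn_Iic (hf : ∀ i ∉ E, (i = k ∨ ∃ h, R h i) → R i (f i))
    (hk : ∀ h, ¬ R h k) (hpred : ∀ i ∉ E, ∀ a b, R a i → R b i → a = b) {n : ℕ}
    (hE : ∀ l < n, f^[l] k ∉ E) : Set.InjOn (fun m => f^[m] k) (Set.Iic n) := by
  intro a ha b hb hab
  by_contra hne
  rcases Nat.lt_or_gt_of_ne hne with h | h
  · exact iterate_ne_iterate_of_lt hf hk hpred h (fun l hl => hE l (by simp at hb; omega)) hab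
  · exact iterate_ne_iterate_of_lt hf hk hpred h (fun l hl => hE l (by simp at ha; omega))
      hab.symm

theorem exists_injective_path_to_of_unique_pred [Finite V]
    (hsucc : ∀ i ∉ E, (i = k ∨ ∃ h, R h i) → ∃ j, R i j) (hk_pred : ∀ h, ¬ R h k)
    (hpred : ∀ i ∉ E, ∀ a b, R a i → R b i → a = b) :
    ∃ (len : ℕ) (v : Fin (len + 1) → V), Function.Injective v ∧ v 0 = k ∧
      v (Fin.last len) ∈ E ∧ ∀ i : Fin len, R (v i.castSucc) (v i.succ) := by
  have : Nonempty V := ⟨k⟩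
  choose! f hf using hsucc
  have hexit : ∃ n, f^[n] k ∈ E := by
    by_contra! h
    refine not_injective_infinite_finite (fun n => f^[n] k) fun a b hab => ?_
    exact iterate_injOn_Iic (n := max a b) hf hk_pred hpred (fun l _ => h l)
      (le_max_left a b) (le_max_right a b) hab
  classical
  have hbefore : ∀ l < Nat.find hexit, f^[l] k ∉ E := fun l => Nat.find_min hexit
  refine ⟨Nat.find hexit, fun i => f^[i] k, fun a b hab => ?_, rfl, Nat.find_spec hexit,
    fun i => rel_iterate_succ hf i fun m hm => hbefore m (by omega)⟩
  exact Fin.ext <| iterate_injOn_Iic hf hk_pred hpred hbefore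
    (Nat.le_of_lt_succ a.isLt) (Nat.le_of_lt_succ b.isLt) hab

end WalkToExit

theorem exists_injective_path_of_unit_flow {V : Type*} [Fintype V] [DecidableEq V]
    {R : V → V → Prop} [DecidableRel R] {E : Set V} {k : V} (hk : k ∉ E)
    (hnet : ∀ i ∉ E, (#{j | R i j} : ℤ) - #{j | R j i} = if i = k then 1 else 0)
    (hdeg : ∀ i ∉ E, #{j | R i j} ≤ 1) :
    ∃ (len : ℕ) (v : Fin (len + 1) → V), Function.Injective v ∧ v 0 = k ∧
      v (Fin.last len) ∈ E ∧ ∀ i : Fin len, R (v i.castSucc) (v i.succ) := by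
  have hk_in : #{j | R j k} = 0 := by
    have hnet_k := hnet k hk
    rw [if_pos rfl] at hnet_k
    have := hdeg k hk
    omega
  have hk_pred : ∀ h, ¬ R h k := by
    simpa [filter_eq_empty_iff] using hk_in
  have hin_eq_out : ∀ i ∉ E, i ≠ k → #{j | R j i} = #{j | R i j} := fun i hi hik => by
    have := hnet i hi
    simp only [if_neg hik] at this
    omega
  refine exists_injective_path_to_of_unique_pred (fun i hi hsrc => ?_) hk_pred
    fun i hi a b ha hb => ?_
  · have hpos : 0 < #{j | R i j} := by
      rcases hsrc with rfl | ⟨h, hR⟩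
      · have := hnet i hi
        rw [if_pos rfl] at this
        omega
      · rw [← hin_eq_out i hi (by rintro rfl; exact hk_pred h hR)]
        exact card_pos.mpr ⟨h, by simpa using hR⟩
    obtain ⟨j, hj⟩ := card_pos.mp hpos
    exact ⟨j, by simpa using hj⟩
  · have hik : i ≠ k := by rintro rfl; exact hk_pred a ha
    have hle : #{j | R j i} ≤ 1 := hin_eq_out i hi hik ▸ hdeg i hi
    exact card_le_one.mp hle a (by simpa using ha) b (by simpa using hb)

/-- **Binary flow with at most one outgoing arc yields a simple path to an exit.**
In a finite directed graph with arcs `Arc`, exits `E`, and `k ∉ E`, if the binary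
vector `y : A → {0,1}` satisfies the flow-conservation constraints at each non-exit
node (net outflow `1` at `k`, `0` elsewhere) and every non-exit node has at most one
outgoing arc with `y = 1`, then there is a directed path from `k` to some node of `E`
using only arcs with `y = 1` that visits no node more than once (a simple path). -/
theorem stmt_8 {V : Type*} [Fintype V] [DecidableEq V]
    (Arc : Finset (V × V)) (E : Finset V) (k : V) (hk : k ∉ E)
    (y : V × V → ℕ) (hbin : ∀ a, y a = 0 ∨ y a = 1)
    (hcons : ∀ i, i ∉ E →
      ((∑ j ∈ Finset.univ.filter (fun j => (i, j) ∈ Arc), (y (i, j) : ℤ)) -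
       (∑ j ∈ Finset.univ.filter (fun j => (j, i) ∈ Arc), (y (j, i) : ℤ))) =
        (if i = k then 1 else 0))
    (hout : ∀ i, i ∉ E →
      (∑ j ∈ Finset.univ.filter (fun j => (i, j) ∈ Arc), y (i, j)) ≤ 1) :
    ∃ (len : ℕ) (v : Fin (len + 1) → V),
      Function.Injective v ∧
      v 0 = k ∧ v (Fin.last len) ∈ E ∧
      ∀ i : Fin len, (v i.castSucc, v i.succ) ∈ Arc ∧ y (v i.castSucc, v i.succ) = 1 := by
  have hout_card : ∀ i, ∑ j ∈ univ.filter (fun j => (i, j) ∈ Arc), y (i, j) =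
      #{j | (i, j) ∈ Arc ∧ y (i, j) = 1} := fun i => by
    rw [sum_eq_card_filter_eq_one _ fun j => hbin (i, j), filter_filter]
  have hin_card : ∀ i, ∑ j ∈ univ.filter (fun j => (j, i) ∈ Arc), y (j, i) =
      #{j | (j, i) ∈ Arc ∧ y (j, i) = 1} := fun i => by
    rw [sum_eq_card_filter_eq_one _ fun j => hbin (j, i), filter_filter]
  refine exists_injective_path_of_unit_flow (R := fun a b => (a, b) ∈ Arc ∧ y (a, b) = 1)
    (E := (E : Set V)) hk (fun i hi => ?_) fun i hi => hout_card i ▸ hout i hi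
  rw [← hout_card, ← hin_card]
  exact_mod_cast hcons i hi
end
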